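/- arXiv:1211.1368 — 2 statements merged into one kernel-verified Lean document; each statement's English description precedes it below -/
import Mathlib

section
/- Let V be a finite-dimensional complex vector space and Sym(V) the polynomial ring. If a power ℓ^{m+1} (m ≥ 1) of a nonzero linear form ℓ lies in the ideal generated by powers ℓᵢ^{kᵢ+1} of linear forms with all kᵢ ≥ 1, then ℓ^m lies in the ideal generated by the powers ℓᵢ^{kᵢ}. -/
open MvPolynomial

noncomputable def linForm {n : ℕ} (v : Fin n → ℂ) : MvPolynomial (Fin n) ℂ :=
  ∑ i, C (v i) * X i

lemma pderiv_linForm {n : ℕ} (j : Fin n) (v : Fin n → ℂ) :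
    pderiv j (linForm v) = C (v j) := by
  simp [linForm, pderiv_X, Pi.single_apply, apply_ite C, Finset.sum_ite_eq']

/-- if a power ℓ^{m+1} of a linear form lies in the ideal generated by
powers ℓᵢ^{kᵢ+1} of linear forms with all kᵢ ≥ 1, then ℓ^m lies in the ideal
generated by the powers ℓᵢ^{kᵢ}. -/
theorem stmt_4 {n r : ℕ} (v : Fin n → ℂ) (w : Fin r → (Fin n → ℂ))
    (m : ℕ) (k : Fin r → ℕ) (hm : 1 ≤ m) (hk : ∀ i, 1 ≤ k i)
    (h : linForm v ^ (m + 1) ∈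
      Ideal.span (Set.range fun i => linForm (w i) ^ (k i + 1))) :
    linForm v ^ m ∈ Ideal.span (Set.range fun i => linForm (w i) ^ (k i)) := by
  by_cases hv : v = 0
  · subst hv
    have : linForm (0 : Fin n → ℂ) = 0 := by simp [linForm]
    rw [this, zero_pow (by omega)]
    exact Ideal.zero_mem _
  · obtain ⟨j, hj⟩ := Function.ne_iff.mp hv
    set J := Ideal.span (Set.range fun i => linForm (w i) ^ (k i)) with hJ
    set D : Derivation ℂ (MvPolynomial (Fin n) ℂ) (MvPolynomial (Fin n) ℂ) :=
      (v j)⁻¹ • pderiv j with hD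
    have hDlin : ∀ u : Fin n → ℂ, D (linForm u) = C ((v j)⁻¹ * u j) := by
      intro u
      simp [hD, pderiv_linForm, smul_eq_C_mul]
    -- generators of the big ideal and their derivatives lie in J
    have key : ∀ p ∈ Ideal.span (Set.range fun i => linForm (w i) ^ (k i + 1)),
        p ∈ J ∧ D p ∈ J := by
      intro p hp
      induction hp using Submodule.span_induction with
      | mem x hx =>
        obtain ⟨i, rfl⟩ := hx
        have hgen : linForm (w i) ^ (k i) ∈ J :=
          Ideal.subset_span ⟨i, rfl⟩
        constructor
        · show linForm (w i) ^ (k i + 1) ∈ J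
          rw [pow_succ]
          exact Ideal.mul_mem_right _ _ hgen
        · show D (linForm (w i) ^ (k i + 1)) ∈ J
          rw [D.leibniz_pow, Nat.add_sub_cancel, hDlin, nsmul_eq_mul, smul_eq_mul]
          exact Ideal.mul_mem_left _ _ (Ideal.mul_mem_right _ _ hgen)
      | zero => simp [Ideal.zero_mem]
      | add x y hx hy ihx ihy =>
        exact ⟨Ideal.add_mem _ ihx.1 ihy.1, by rw [map_add]; exact Ideal.add_mem _ ihx.2 ihy.2⟩
      | smul a x hx ihx =>
        refine ⟨Ideal.mul_mem_left _ _ ihx.1, ?_⟩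
        rw [smul_eq_mul, D.leibniz]
        exact Ideal.add_mem _ (Submodule.smul_mem _ _ ihx.2)
          (Ideal.mul_mem_right _ _ ihx.1)
    have hD2 := (key _ h).2
    rw [D.leibniz_pow, Nat.add_sub_cancel, hDlin, inv_mul_cancel₀ hj, C_1, smul_eq_mul,
      mul_one, nsmul_eq_mul] at hD2
    have := Ideal.mul_mem_left _ (C ((m + 1 : ℂ)⁻¹)) hD2
    rwa [← mul_assoc, ← C_eq_coe_nat, ← C_mul, Nat.cast_add, Nat.cast_one, inv_mul_cancel₀ (by exact_mod_cast Nat.succ_ne_zero m), C_1, one_mul]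
      at this
end

section
/- For a finite hyperplane arrangement 𝒜 in V with ρ(𝒜) = min over nonzero h of the number of hyperplanes of 𝒜 not containing h, the degree-1 component of the inverse system C_{𝒜,−ρ} equals the annihilator (in V*) of the span of the 'large' vectors, i.e., those nonzero h lying on the maximum number of hyperplanes. -/
open MvPolynomial

/-- The directional derivative ∂_h on polynomials on ℂᵈ. -/
noncomputable def dirDeriv {d : ℕ} (h : Fin d → ℂ) :
    Module.End ℂ (MvPolynomial (Fin d) ℂ) :=
  ∑ i, h i • (pderiv i).toLinearMap

open Classical in
/-- ρ_𝒜(h): the number of hyperplanes of the arrangement (given by the linear forms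
`L i`) not containing `h`. -/
noncomputable def rhoA {d n : ℕ} (L : Fin n → ((Fin d → ℂ) →ₗ[ℂ] ℂ)) (h : Fin d → ℂ) : ℕ :=
  (Finset.univ.filter fun i => L i h ≠ 0).card

/-! A linear form `f` has `∂_h f = f(h)`, a constant, so `∂_h^(k+1) f = 0` is automatic for
`k ≥ 1` and means `f(h) = 0` for `k = 0`. With `k = ρ_𝒜(h) - ρ`, only the large `h` impose a
condition. -/

namespace MvPolynomial

variable {d : ℕ} (h : Fin d → ℂ)

lemma dirDeriv_C (c : ℂ) : dirDeriv h (C c) = 0 := by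
  simp [dirDeriv]

lemma dirDeriv_X (i : Fin d) : dirDeriv h (X i) = C (h i) := by
  simp [dirDeriv, pderiv_X, Pi.single_apply, smul_eq_C_mul]

lemma IsHomogeneous.dirDeriv_eq_C_eval {f : MvPolynomial (Fin d) ℂ} (hf : f.IsHomogeneous 1) :
    dirDeriv h f = C (eval h f) := by
  conv_lhs => rw [f.as_sum]
  conv_rhs => rw [f.as_sum]
  simp only [map_sum]
  refine Finset.sum_congr rfl fun m hm => ?_
  obtain ⟨i, rfl⟩ : m ∈ Set.range (Finsupp.single · 1) := by
    rw [Finsupp.range_single_one]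
    show m.degree = 1
    rw [Finsupp.degree_eq_weight_one]
    exact hf (mem_support_iff.1 hm)
  rw [← C_mul_X_eq_monomial, ← smul_eq_C_mul, map_smul, dirDeriv_X]
  simp [smul_eq_C_mul, mul_comm]

lemma IsHomogeneous.dirDeriv_pow_succ_eq_zero_iff {f : MvPolynomial (Fin d) ℂ}
    (hf : f.IsHomogeneous 1) (k : ℕ) :
    (dirDeriv h ^ (k + 1)) f = 0 ↔ (k = 0 → eval h f = 0) := by
  rcases k with _ | k
  · simp [hf.dirDeriv_eq_C_eval]
  · simp [pow_succ, hf.dirDeriv_eq_C_eval, dirDeriv_C]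

end MvPolynomial

theorem stmt_6_general {d n : ℕ} (L : Fin n → ((Fin d → ℂ) →ₗ[ℂ] ℂ))
    (ρ : ℕ) (hmin : ∀ h : Fin d → ℂ, h ≠ 0 → ρ ≤ rhoA L h)
    (f : MvPolynomial (Fin d) ℂ) (hf : f.IsHomogeneous 1) :
    (∀ h : Fin d → ℂ, h ≠ 0 → (dirDeriv h ^ (rhoA L h - ρ + 1)) f = 0)
      ↔ (∀ h : Fin d → ℂ, h ≠ 0 → rhoA L h = ρ → eval h f = 0) := by
  refine forall₂_congr fun h hne => ?_
  rw [hf.dirDeriv_pow_succ_eq_zero_iff, Nat.sub_eq_zero_iff_le, (hmin h hne).ge_iff_eq']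

/-- for an arrangement 𝒜 with minimal value ρ of ρ_𝒜, a degree-1
polynomial f lies in C_{𝒜,−ρ} iff f vanishes on all large vectors (those with
ρ_𝒜(h) = ρ). -/
theorem stmt_6 {d n : ℕ} (L : Fin n → ((Fin d → ℂ) →ₗ[ℂ] ℂ)) (hL : ∀ i, L i ≠ 0)
    (ρ : ℕ) (hmin : ∀ h : Fin d → ℂ, h ≠ 0 → ρ ≤ rhoA L h)
    (hex : ∃ h : Fin d → ℂ, h ≠ 0 ∧ rhoA L h = ρ)
    (f : MvPolynomial (Fin d) ℂ) (hf : f.IsHomogeneous 1) :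
    (∀ h : Fin d → ℂ, h ≠ 0 → (dirDeriv h ^ (rhoA L h - ρ + 1)) f = 0)
      ↔ (∀ h : Fin d → ℂ, h ≠ 0 → rhoA L h = ρ → eval h f = 0) :=
  stmt_6_general L ρ hmin f hf
end
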